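/- Let T : [r_0, ∞) → ℝ be a nondecreasing function with T(r) ≥ 1 for all r. Then the set E' of all r ∈ [r_0, ∞) for which T(r + 1/T(r)) > 2·T(r) has finite Lebesgue measure. -/
import Mathlib

open MeasureTheory Set

private lemma exists_dyadic (t : ℝ) (ht : 1 ≤ t) :
    ∃ n : ℕ, (2:ℝ) ^ n ≤ t ∧ t < 2 ^ (n + 1) := by
  obtain ⟨m, hm⟩ := pow_unbounded_of_one_lt t (by norm_num : (1:ℝ) < 2)
  have hP : t < 2 ^ (m + 1) :=
    hm.trans_le (pow_le_pow_right₀ (by norm_num) (Nat.le_succ m))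
  classical
  have hex : ∃ k, t < 2 ^ (k + 1) := ⟨m, hP⟩
  let n := Nat.find hex
  have hn : t < 2 ^ (n + 1) := Nat.find_spec hex
  refine ⟨n, ?_, hn⟩
  rcases Nat.eq_zero_or_pos n with h | h
  · simpa [h] using ht
  · obtain ⟨k, hk⟩ := Nat.exists_eq_succ_of_ne_zero h.ne'
    have := Nat.find_min hex (by omega : k < n)
    push_neg at this
    simpa [hk] using this

/-- Borel growth lemma on `[r₀, ∞)`: the exceptional set `E'` where
`T(r + 1/T(r)) > 2 T(r)` has finite Lebesgue measure. -/
theorem borel_growth_infinite (r₀ : ℝ) (h0 : 0 < r₀) (T : ℝ → ℝ)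
    (hmono : MonotoneOn T (Set.Ici r₀)) (hT : ∀ r ∈ Set.Ici r₀, 1 ≤ T r) :
    MeasureTheory.volume {r ∈ Set.Ici r₀ | 2 * T r < T (r + 1 / T r)} < ⊤ := by
  set E : Set ℝ := {r ∈ Set.Ici r₀ | 2 * T r < T (r + 1 / T r)} with hE
  set A : ℕ → Set ℝ := fun n => {r ∈ Set.Ici r₀ | (2:ℝ) ^ n ≤ T r ∧ T r < 2 ^ (n + 1)}
    with hA
  -- key: within one dyadic level, exceptional points are within (1/2)^n of any level point
  have key : ∀ n : ℕ, ∀ x ∈ E ∩ A n, ∀ y ∈ A n, y ≤ x + (1/2 : ℝ) ^ n := by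
    intro n x hx y hy
    by_contra hcon
    push_neg at hcon
    obtain ⟨⟨hxr, hxE⟩, hxr', hxl, hxu⟩ := hx
    obtain ⟨hyr, hyl, hyu⟩ := hy
    have h2n : (0:ℝ) < 2 ^ n := by positivity
    have hTx : 0 < T x := lt_of_lt_of_le h2n hxl
    have hinv : 1 / T x ≤ (1/2 : ℝ) ^ n := by
      rw [one_div_pow]
      exact one_div_le_one_div_of_le h2n hxl
    have hle : x + 1 / T x ≤ y := by linarith
    have hxmem : x + 1 / T x ∈ Set.Ici r₀ := by
      have : (0:ℝ) ≤ 1 / T x := by positivity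
      simp only [Set.mem_Ici] at hxr ⊢; linarith
    have hmon := hmono hxmem hyr hle
    have : (2:ℝ) ^ (n + 1) ≤ T y :=
      le_of_lt <|
      calc (2:ℝ) ^ (n+1) = 2 * 2 ^ n := by ring
        _ ≤ 2 * T x := by linarith
        _ < T (x + 1 / T x) := hxE
        _ ≤ T y := hmon
    linarith
  -- diameter bound
  have hdiam : ∀ n : ℕ, EMetric.diam (E ∩ A n) ≤ ENNReal.ofReal ((1/2 : ℝ) ^ n) := by
    intro n
    refine EMetric.diam_le fun x hx y hy => ?_
    have h1 := key n x hx y hy.2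
    have h2 := key n y hy x hx.2
    rw [edist_dist]
    refine ENNReal.ofReal_le_ofReal ?_
    rw [Real.dist_eq, abs_sub_le_iff]
    constructor <;> linarith
  -- covering
  have hcover : E ⊆ ⋃ n, E ∩ A n := by
    intro r hr
    obtain ⟨n, h1, h2⟩ := exists_dyadic (T r) (hT r hr.1)
    exact Set.mem_iUnion.2 ⟨n, hr, hr.1, h1, h2⟩
  calc MeasureTheory.volume E ≤ MeasureTheory.volume (⋃ n, E ∩ A n) :=
        measure_mono hcover
    _ ≤ ∑' n, MeasureTheory.volume (E ∩ A n) := measure_iUnion_le _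
    _ ≤ ∑' n, ENNReal.ofReal ((1/2 : ℝ) ^ n) :=
        ENNReal.tsum_le_tsum fun n => (Real.volume_le_diam _).trans (hdiam n)
    _ = ∑' n : ℕ, (ENNReal.ofReal (1/2)) ^ n := by
        congr 1; ext n; rw [← ENNReal.ofReal_pow (by norm_num)]
    _ = (1 - ENNReal.ofReal (1/2))⁻¹ := ENNReal.tsum_geometric _
    _ < ⊤ := by
        refine ENNReal.inv_lt_top.2 (tsub_pos_of_lt ?_)
        rw [ENNReal.ofReal_lt_one]; norm_num
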